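/- arXiv:2403.01940 — 3 statements merged into one kernel-verified Lean document; each statement's English description precedes it below -/
import Mathlib

section
/- For every u > 0, ∫_0^u x^{n-1}e^x dx ≤ ((n+1)u^n)/(n(u+n+1))·e^u for every real n > 0, with equality only at u = 0. -/
open Real

theorem stmt14 (n : ℝ) (hn : 0 < n) (u : ℝ) (hu : 0 < u) :
    ∫ x in (0 : ℝ)..u, x ^ (n - 1) * Real.exp x <
      ((n + 1) * u ^ n) / (n * (u + n + 1)) * Real.exp u := by
  set F : ℝ → ℝ := fun x => ((n + 1) * x ^ n) / (n * (x + n + 1)) * Real.exp x with hF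
  set g : ℝ → ℝ := fun x => x ^ (n - 1) * Real.exp x with hg
  set h : ℝ → ℝ := fun x => x ^ (n + 1) * Real.exp x / (n * (x + n + 1) ^ 2) with hh
  have hden : ∀ x : ℝ, 0 ≤ x → n * (x + n + 1) ≠ 0 := by
    intro x hx; positivity
  -- derivative of F
  have hderiv : ∀ x ∈ Set.Ioo (0:ℝ) u, HasDerivAt F (g x + h x) x := by
    intro x hx
    obtain ⟨hx0, hxu⟩ := hx
    have hxn : HasDerivAt (fun x : ℝ => x ^ n) (n * x ^ (n - 1)) x :=
      Real.hasDerivAt_rpow_const (Or.inl hx0.ne')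
    have hnum : HasDerivAt (fun x : ℝ => (n + 1) * x ^ n)
        ((n + 1) * (n * x ^ (n - 1))) x := hxn.const_mul _
    have hden' : HasDerivAt (fun x : ℝ => n * (x + n + 1)) n x := by
      have : HasDerivAt (fun x : ℝ => x + n + 1) 1 x := by
        simpa [add_assoc] using (hasDerivAt_id x).add_const (n + 1)
      simpa using this.const_mul n
    have hq : HasDerivAt (fun x : ℝ => ((n + 1) * x ^ n) / (n * (x + n + 1)))
        (((n + 1) * (n * x ^ (n - 1)) * (n * (x + n + 1)) - (n + 1) * x ^ n * n) /
          (n * (x + n + 1)) ^ 2) x :=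
      hnum.div hden' (hden x hx0.le)
    have := hq.mul (Real.hasDerivAt_exp x)
    convert this using 1
    case e'_4 => rfl
    case e'_5 => rfl
    case e'_8 => rfl
    have hxne : (x : ℝ) ≠ 0 := hx0.ne'
    have e1 : x ^ n = x ^ (n - 1) * x := by
      rw [← Real.rpow_add_one hxne]; ring_nf
    have e2 : x ^ (n + 1) = x ^ (n - 1) * x ^ 2 := by
      rw [show n + 1 = (n - 1) + 2 by ring, Real.rpow_add hx0, Real.rpow_two]
    have hd2 : (n * (x + n + 1)) ≠ 0 := hden x hx0.le
    have hd3 : (x + n + 1) ≠ 0 := by positivity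
    simp only [hg, hh, e1, e2]
    field_simp
    ring
  -- continuity of F on [0, u]
  have hFcont : ContinuousOn F (Set.Icc 0 u) := by
    apply ContinuousOn.mul _ Real.continuous_exp.continuousOn
    · apply ContinuousOn.div
      · exact (continuousOn_const.mul ((Real.continuous_rpow_const hn.le).continuousOn))
      · fun_prop
      · intro x hx; exact hden x hx.1
  have hint_g : IntervalIntegrable g MeasureTheory.volume 0 u := by
    have h1 : IntervalIntegrable (fun x : ℝ => x ^ (n - 1)) MeasureTheory.volume 0 u :=
      intervalIntegral.intervalIntegrable_rpow' (by linarith)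
    exact h1.mul_continuousOn Real.continuous_exp.continuousOn
  have hint_h : IntervalIntegrable h MeasureTheory.volume 0 u := by
    apply ContinuousOn.intervalIntegrable
    apply ContinuousOn.div
    · exact ((Real.continuous_rpow_const (by linarith)).continuousOn.mul
        Real.continuous_exp.continuousOn)
    · fun_prop
    · intro x hx
      rw [Set.uIcc_of_le hu.le] at hx
      have hx0 := hx.1
      positivity
  have hFTC : ∫ x in (0:ℝ)..u, (g x + h x) = F u - F 0 :=
    intervalIntegral.integral_eq_sub_of_hasDerivAt_of_le hu.le hFcont hderiv
      (hint_g.add hint_h)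
  have hF0 : F 0 = 0 := by
    simp [hF, Real.zero_rpow hn.ne']
  have hposint : 0 < ∫ x in (0:ℝ)..u, h x := by
    apply intervalIntegral.intervalIntegral_pos_of_pos_on hint_h _ hu
    intro x hx
    have hx0 := hx.1
    have : (0:ℝ) < x + n + 1 := by linarith
    simp only [hh]
    positivity
  have hsplit : (∫ x in (0:ℝ)..u, g x) + ∫ x in (0:ℝ)..u, h x = F u - F 0 := by
    rw [← intervalIntegral.integral_add hint_g hint_h]; exact hFTC
  have : (∫ x in (0:ℝ)..u, g x) < F u := by
    rw [hF0, sub_zero] at hsplit; linarith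
  simpa [hg, hF] using this
end

section
/- Let n ≥ 1 be an integer and δ ∈ (n, n+1). The equation e^{-u} = 1 - u/1! + ... + (-1)^{n-1}u^{n-1}/(n-1)! + (-1)^n·δ·u^n/(n!(u+δ)) has exactly one solution u > 0. -/
open Real Finset

/-- Degree-(n-1) Taylor polynomial of `exp(-u)` at 0. -/
noncomputable def A (n : ℕ) (u : ℝ) : ℝ :=
  ∑ k ∈ Finset.range n, (-1 : ℝ) ^ k * u ^ k / (Nat.factorial k)

noncomputable def S (n : ℕ) (u : ℝ) : ℝ := (-1) ^ n * (Real.exp (-u) - A n u)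

lemma A_zero (u : ℝ) : A 0 u = 0 := by simp [A]

lemma A_succ (n : ℕ) (u : ℝ) :
    A (n + 1) u = A n u + (-1 : ℝ) ^ n * u ^ n / (Nat.factorial n) := by
  simp [A, Finset.sum_range_succ]

lemma A_apply_zero (n : ℕ) (hn : 1 ≤ n) : A n 0 = 1 := by
  obtain ⟨m, rfl⟩ : ∃ m, n = m + 1 := ⟨n - 1, (Nat.succ_pred_eq_of_pos hn).symm⟩
  induction m with
  | zero => simp [A]
  | succ k ih =>
      rw [A_succ, ih (Nat.le_add_left 1 k)]
      simp

lemma S_zero (u : ℝ) : S 0 u = Real.exp (-u) := by simp [S, A_zero]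

lemma S_succ (n : ℕ) (u : ℝ) :
    S (n + 1) u = u ^ n / (Nat.factorial n) - S n u := by
  have h1 : ((-1:ℝ))^n * (-1:ℝ)^n = 1 := by
    rw [← pow_add, ← two_mul, pow_mul]; norm_num
  rw [S, S, A_succ, pow_succ]
  linear_combination (u ^ n / (Nat.factorial n : ℝ)) * h1

lemma S_apply_zero (n : ℕ) (hn : 1 ≤ n) : S n 0 = 0 := by
  simp [S, A_apply_zero n hn, Real.exp_zero]

lemma hasDerivAt_A (n : ℕ) (u : ℝ) :
    HasDerivAt (A (n + 1)) (-(A n u)) u := by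
  have h : ∀ k ∈ Finset.range (n+1), HasDerivAt (fun x : ℝ => (-1 : ℝ) ^ k * x ^ k / (Nat.factorial k))
      ((-1 : ℝ) ^ k * ((k : ℝ) * u ^ (k - 1)) / (Nat.factorial k)) u := by
    intro k _
    exact ((hasDerivAt_pow k u).const_mul ((-1 : ℝ) ^ k)).div_const _
  have := HasDerivAt.fun_sum h
  refine this.congr_deriv ?_
  rw [Finset.sum_range_succ']
  simp only [pow_zero, Nat.cast_zero, zero_mul, mul_zero, Nat.factorial_zero, Nat.cast_one,
    zero_div, add_zero, one_mul]
  rw [A, ← Finset.sum_neg_distrib]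
  apply Finset.sum_congr rfl
  intro i _
  have h1 : ((i + 1).factorial : ℝ) = (i + 1) * i.factorial := by
    rw [Nat.factorial_succ]; push_cast; ring
  have h2 : (i.factorial : ℝ) ≠ 0 := Nat.cast_ne_zero.mpr (Nat.factorial_ne_zero i)
  rw [h1, Nat.add_sub_cancel]
  field_simp
  push_cast
  ring

lemma hasDerivAt_S (n : ℕ) (u : ℝ) :
    HasDerivAt (S (n + 1)) (S n u) u := by
  have he : HasDerivAt (fun x : ℝ => Real.exp (-x)) (-Real.exp (-u)) u := by
    simpa using (hasDerivAt_neg u).exp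
  have := ((he.sub (hasDerivAt_A n u)).const_mul ((-1 : ℝ) ^ (n + 1)))
  refine this.congr_deriv ?_
  rw [S, pow_succ]
  ring

lemma pos_of_hasDerivAt (f f' : ℝ → ℝ) (hf : ∀ x, HasDerivAt f (f' x) x)
    (h0 : f 0 = 0) (hp : ∀ x, 0 < x → 0 < f' x) : ∀ x, 0 < x → 0 < f x := by
  have hmono : StrictMonoOn f (Set.Ici 0) := by
    apply strictMonoOn_of_deriv_pos (convex_Ici 0)
    · exact fun x _ => (hf x).continuousAt.continuousWithinAt
    · intro x hx
      rw [interior_Ici] at hx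
      rw [(hf x).deriv]
      exact hp x hx
  intro x hx
  have := hmono Set.self_mem_Ici (Set.mem_Ici.mpr hx.le) hx
  rwa [h0] at this

lemma S_pos (n : ℕ) : ∀ u, 0 < u → 0 < S n u := by
  induction n with
  | zero => intro u _; rw [S_zero]; exact Real.exp_pos _
  | succ k ih =>
      exact pos_of_hasDerivAt (S (k+1)) (S k) (fun x => hasDerivAt_S k x)
        (S_apply_zero (k+1) (Nat.le_add_left 1 k)) ih

/-- D n u = n * S n u - u * S (n-1) u, stated for n = m+1. -/
lemma D_pos (m : ℕ) : ∀ u, 0 < u →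
    0 < ((m : ℝ) + 1) * S (m + 1) u - u * S m u := by
  induction m with
  | zero =>
      intro u hu
      rw [S_succ, S_zero]
      have h := Real.add_one_lt_exp (x := u) (by positivity)
      have he : Real.exp (-u) = (Real.exp u)⁻¹ := by rw [Real.exp_neg]
      rw [he]
      have hexp : 0 < Real.exp u := Real.exp_pos u
      simp only [pow_zero, Nat.factorial_zero]
      rw [div_eq_mul_inv]
      have : (u + 1) * (Real.exp u)⁻¹ < 1 := by
        rw [mul_inv_lt_iff₀ hexp, one_mul]
        linarith
      nlinarith [mul_pos hu (inv_pos.mpr hexp)]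
  | succ k ih =>
      push_cast
      apply pos_of_hasDerivAt
        (fun u => ((k : ℝ) + 1 + 1) * S (k + 2) u - u * S (k + 1) u)
        (fun u => ((k : ℝ) + 1) * S (k + 1) u - u * S k u)
      · intro x
        have h1 := (hasDerivAt_S (k+1) x).const_mul ((k : ℝ) + 1 + 1)
        have h2 := (hasDerivAt_id x).mul (hasDerivAt_S k x)
        have := h1.sub h2
        refine this.congr_deriv ?_
        simp only [id]
        ring
      · rw [S_apply_zero (k+2) (by omega), S_apply_zero (k+1) (by omega)]
        ring
      · exact ih

lemma V_sign (m : ℕ) (ε : ℝ) (hε0 : 0 < ε) (hε1 : ε < 1) :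
    ∃ c, 0 < c ∧
      (∀ u, 0 < u → u < c → ε * u ^ (m+1) < (Nat.factorial (m+1) : ℝ) * S (m+1) u) ∧
      (∀ u, c < u → (Nat.factorial (m+1) : ℝ) * S (m+1) u < ε * u ^ (m+1)) := by
  set c! : ℝ := (Nat.factorial (m+1) : ℝ) with hcdef
  have hcpos : 0 < c! := by positivity
  set ρ : ℝ → ℝ := fun u => c! * S (m+1) u / u ^ (m+1) with hρdef
  have hder : ∀ u, 0 < u → HasDerivAt ρ
      ((c! * S m u * u ^ (m+1) - c! * S (m+1) u * (((m:ℝ)+1) * u ^ m)) / (u ^ (m+1)) ^ 2) u := by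
    intro u hu
    have h1 := ((hasDerivAt_S m u).const_mul c!).div (hasDerivAt_pow (m+1) u)
      (by positivity)
    refine h1.congr_deriv ?_
    push_cast
    ring
  have hderneg : ∀ u, 0 < u →
      (c! * S m u * u ^ (m+1) - c! * S (m+1) u * (((m:ℝ)+1) * u ^ m)) / (u ^ (m+1)) ^ 2 < 0 := by
    intro u hu
    apply div_neg_of_neg_of_pos _ (by positivity)
    have hD := D_pos m u hu
    have hnum : c! * S m u * u ^ (m+1) - c! * S (m+1) u * (((m:ℝ)+1) * u ^ m)
        = - (c! * u ^ m) * (((m:ℝ)+1) * S (m+1) u - u * S m u) := by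
      rw [pow_succ]; ring
    rw [hnum]
    have : 0 < c! * u ^ m := by positivity
    nlinarith
  have hanti : StrictAntiOn ρ (Set.Ioi 0) := by
    apply strictAntiOn_of_deriv_neg (convex_Ioi 0)
    · exact fun u hu => (hder u hu).continuousAt.continuousWithinAt
    · intro u hu
      rw [interior_Ioi] at hu
      rw [(hder u hu).deriv]
      exact hderneg u hu
  have hfact2 : ((m+2).factorial : ℝ) = ((m:ℝ)+2) * c! := by
    rw [hcdef, show m + 2 = (m+1) + 1 from rfl, Nat.factorial_succ]
    push_cast; ring
  have hlow : ∀ u, 0 < u → 1 - u / ((m:ℝ)+2) ≤ ρ u := by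
    intro u hu
    have e1 : S (m+2) u = u ^ (m+1) / c! - S (m+1) u := S_succ (m+1) u
    have e2 : S (m+3) u = u ^ (m+2) / ((m+2).factorial : ℝ) - S (m+2) u := S_succ (m+2) u
    have e3 : 0 < S (m+3) u := S_pos (m+3) u hu
    have key : u ^ (m+1) / c! - u ^ (m+2) / (((m:ℝ)+2) * c!) ≤ S (m+1) u := by
      rw [← hfact2]; linarith
    rw [hρdef]
    rw [le_div_iff₀ (by positivity : (0:ℝ) < u ^ (m+1))]
    have h4 := mul_le_mul_of_nonneg_left key hcpos.le
    have h5 : c! * (u ^ (m+1) / c! - u ^ (m+2) / (((m:ℝ)+2) * c!))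
        = u ^ (m+1) - u ^ (m+2) / ((m:ℝ)+2) := by
      field_simp
    have h6 : (1 - u / ((m:ℝ)+2)) * u ^ (m+1) = u ^ (m+1) - u ^ (m+2) / ((m:ℝ)+2) := by
      rw [pow_succ]
      field_simp
      ring
    rw [h6]
    linarith [h5 ▸ h4]
  have hup : ∀ u, 0 < u → ρ u < ((m:ℝ)+1) / u := by
    intro u hu
    have e1 : S (m+1) u = u ^ m / (Nat.factorial m : ℝ) - S m u := S_succ m u
    have e2 : 0 < S m u := S_pos m u hu
    have hfact1 : c! = ((m:ℝ)+1) * (Nat.factorial m : ℝ) := by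
      rw [hcdef, Nat.factorial_succ]; push_cast; ring
    rw [hρdef]
    rw [div_lt_div_iff₀ (by positivity : (0:ℝ) < u ^ (m+1)) hu]
    have hm : (0:ℝ) < (Nat.factorial m : ℝ) := by positivity
    have : c! * S (m+1) u < c! * (u ^ m / (Nat.factorial m : ℝ)) := by
      rw [e1]
      have : 0 < c! * S m u := by positivity
      nlinarith
    have h7 : c! * (u ^ m / (Nat.factorial m : ℝ)) * u = ((m:ℝ)+1) * u ^ (m+1) := by
      rw [hfact1, pow_succ]
      field_simp
    nlinarith
  -- points a and b
  set a : ℝ := ((m:ℝ)+2) * (1-ε) / 2 with hadef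
  set b : ℝ := ((m:ℝ)+2) / ε with hbdef
  have ha0 : 0 < a := by
    rw [hadef]
    have : (0:ℝ) < (m:ℝ) + 2 := by positivity
    nlinarith
  have hb0 : 0 < b := by positivity
  have hab : a < b := by
    rw [hadef, hbdef, div_lt_div_iff₀ (by norm_num) hε0]
    have : (0:ℝ) < (m:ℝ) + 2 := by positivity
    nlinarith
  have hρa : ε < ρ a := by
    have := hlow a ha0
    have h8 : 1 - a / ((m:ℝ)+2) = (1+ε)/2 := by
      rw [hadef]
      field_simp
      ring
    rw [h8] at this
    linarith
  have hρb : ρ b < ε := by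
    have := hup b hb0
    have h9 : ((m:ℝ)+1) / b = ((m:ℝ)+1) * ε / ((m:ℝ)+2) := by
      rw [hbdef]
      field_simp
    rw [h9] at this
    have hm2 : (0:ℝ) < (m:ℝ) + 2 := by positivity
    have : ((m:ℝ)+1) * ε / ((m:ℝ)+2) < ε := by
      rw [div_lt_iff₀ hm2]
      nlinarith
    linarith
  have hcont : ContinuousOn ρ (Set.Icc a b) := by
    intro u hu
    exact (hder u (lt_of_lt_of_le ha0 hu.1)).continuousAt.continuousWithinAt
  have hIVT := intermediate_value_Icc' hab.le hcont
  have hmem : ε ∈ Set.Icc (ρ b) (ρ a) := ⟨hρb.le, hρa.le⟩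
  obtain ⟨c, hcmem, hcval⟩ := hIVT hmem
  have hc0 : 0 < c := lt_of_lt_of_le ha0 hcmem.1
  refine ⟨c, hc0, ?_, ?_⟩
  · intro u hu huc
    have h10 : ρ c < ρ u := hanti (Set.mem_Ioi.mpr hu) (Set.mem_Ioi.mpr hc0) huc
    rw [hcval] at h10
    rw [hρdef, lt_div_iff₀ (by positivity : (0:ℝ) < u ^ (m+1))] at h10
    linarith
  · intro u hcu
    have hu : 0 < u := hc0.trans hcu
    have h10 : ρ u < ρ c := hanti (Set.mem_Ioi.mpr hc0) (Set.mem_Ioi.mpr hu) hcu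
    rw [hcval] at h10
    rw [hρdef, div_lt_iff₀ (by positivity : (0:ℝ) < u ^ (m+1))] at h10
    linarith

theorem stmt15 (n : ℕ) (hn : 1 ≤ n) (δ : ℝ) (hδ : δ ∈ Set.Ioo (n : ℝ) ((n : ℝ) + 1)) :
    ∃! u : ℝ, 0 < u ∧
      Real.exp (-u) = A n u + (-1 : ℝ) ^ n * δ * u ^ n / (Nat.factorial n * (u + δ)) := by
  obtain ⟨hδl, hδr⟩ := hδ
  obtain ⟨m, rfl⟩ : ∃ m, n = m + 1 := ⟨n - 1, (Nat.succ_pred_eq_of_pos hn).symm⟩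
  push_cast at hδl hδr
  set ε : ℝ := δ - ((m:ℝ)+1) with hεdef
  have hε0 : 0 < ε := by rw [hεdef]; linarith
  have hε1 : ε < 1 := by rw [hεdef]; linarith
  have hδ0 : (0:ℝ) < δ := by have : (0:ℝ) ≤ (m:ℝ) := Nat.cast_nonneg m; linarith
  set c! : ℝ := (Nat.factorial (m+1) : ℝ) with hcdef
  have hcpos : 0 < c! := by positivity
  -- equivalence of the equation with a polynomial-type equation
  have key : ∀ u : ℝ, 0 < u →
      ((Real.exp (-u) = A (m+1) u + (-1:ℝ)^(m+1) * δ * u^(m+1) / ((Nat.factorial (m+1):ℝ) * (u + δ)))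
        ↔ δ * u^(m+1) = c! * (u + δ) * S (m+1) u) := by
    intro u hu
    have hud : (0:ℝ) < u + δ := by linarith
    have hp : ((-1:ℝ))^(m+1) * ((-1:ℝ))^(m+1) = 1 := by
      rw [← pow_add, ← two_mul, pow_mul]; norm_num
    rw [S]
    rw [← sub_eq_iff_eq_add', eq_div_iff (by positivity : (Nat.factorial (m+1):ℝ) * (u + δ) ≠ 0)]
    constructor
    · intro h
      linear_combination (-(-1:ℝ)^(m+1)) * h - δ * u^(m+1) * hp
    · intro h
      linear_combination (-(-1:ℝ)^(m+1)) * h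
        - ((Nat.factorial (m+1):ℝ) * (u + δ) * (Real.exp (-u) - A (m+1) u)) * hp
  -- the function G and its derivative
  set G : ℝ → ℝ := fun u => Real.exp u * (δ * u^(m+1) - c! * (u + δ) * S (m+1) u) with hGdef
  have hG' : ∀ u, HasDerivAt G (Real.exp u * (ε * u^(m+1) - c! * S (m+1) u)) u := by
    intro u
    have h1 : HasDerivAt (fun x : ℝ => δ * x^(m+1) - c! * (x + δ) * S (m+1) x)
        (δ * (((m:ℝ)+1) * u^m) - c! * (1 * S (m+1) u + (u + δ) * S m u)) u := by
      have ha := (hasDerivAt_pow (m+1) u).const_mul δ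
      have hb := (((hasDerivAt_id u).add_const δ).mul (hasDerivAt_S m u)).const_mul c!
      have h := ha.sub hb
      have heq : (fun x:ℝ => δ * x^(m+1) - c! * (x + δ) * S (m+1) x)
          = fun x:ℝ => δ * x^(m+1) - c! * ((id x + δ) * S (m+1) x) := by
        funext x; simp only [id]; ring
      rw [heq]
      refine h.congr_deriv ?_
      push_cast
      simp only [id, Nat.add_sub_cancel]
    have h2 := (Real.hasDerivAt_exp u).mul h1
    refine h2.congr_deriv ?_
    have hS : S m u = u^m / (Nat.factorial m : ℝ) - S (m+1) u := by
      have := S_succ m u; linarith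
    have hfact : c! = ((m:ℝ)+1) * (Nat.factorial m : ℝ) := by
      rw [hcdef, Nat.factorial_succ]; push_cast; ring
    have hm0 : (Nat.factorial m : ℝ) ≠ 0 := by positivity
    rw [hS, hεdef, hfact]
    field_simp
    ring
  have hGcont : Continuous G := by
    have : Differentiable ℝ G := fun u => (hG' u).differentiableAt
    exact this.continuous
  have hG0 : G 0 = 0 := by
    rw [hGdef]
    simp [S_apply_zero (m+1) (by omega), pow_succ]
  -- sign change of V
  obtain ⟨c, hc0, hVneg, hVpos⟩ := V_sign m ε hε0 hε1
  rw [← hcdef] at hVneg hVpos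
  -- G strictly decreasing on [0,c]
  have hanti : StrictAntiOn G (Set.Icc 0 c) := by
    apply strictAntiOn_of_deriv_neg (convex_Icc 0 c) hGcont.continuousOn
    intro u hu
    rw [interior_Icc] at hu
    rw [(hG' u).deriv]
    have := hVneg u hu.1 hu.2
    have he : 0 < Real.exp u := Real.exp_pos u
    nlinarith
  -- G strictly increasing on [c,∞)
  have hmono : StrictMonoOn G (Set.Ici c) := by
    apply strictMonoOn_of_deriv_pos (convex_Ici c) hGcont.continuousOn
    intro u hu
    rw [interior_Ici] at hu
    rw [(hG' u).deriv]
    have := hVpos u hu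
    have he : 0 < Real.exp u := Real.exp_pos u
    nlinarith
  have hGc : G c < 0 := by
    have := hanti (Set.mem_Icc.mpr ⟨le_rfl, hc0.le⟩) (Set.mem_Icc.mpr ⟨hc0.le, le_rfl⟩) hc0
    rwa [hG0] at this
  -- a point b > c with G b > 0
  set b : ℝ := max (c+1) (((m:ℝ)+1) * δ / ε + 1) with hbdef
  have hcb : c < b := lt_of_lt_of_le (by linarith) (le_max_left _ _)
  have hb0 : 0 < b := hc0.trans hcb
  have hbig : ((m:ℝ)+1) * δ / ε < b := lt_of_lt_of_le (by linarith) (le_max_right _ _)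
  have hGb : 0 < G b := by
    rw [hGdef]
    have he : 0 < Real.exp b := Real.exp_pos b
    have hSm : 0 < S m b := S_pos m b hb0
    have hS : S (m+1) b = b^m / (Nat.factorial m : ℝ) - S m b := S_succ m b
    have hfact : c! = ((m:ℝ)+1) * (Nat.factorial m : ℝ) := by
      rw [hcdef, Nat.factorial_succ]; push_cast; ring
    have hm0 : (0:ℝ) < (Nat.factorial m : ℝ) := by positivity
    have hinner : 0 < δ * b^(m+1) - c! * (b + δ) * S (m+1) b := by
      have h1 : c! * (b + δ) * S (m+1) b
          = ((m:ℝ)+1) * (b + δ) * b^m - c! * (b + δ) * S m b := by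
        rw [hS, hfact]
        field_simp
      have h2 : 0 < c! * (b + δ) * S m b := by positivity
      have h3 : δ * b^(m+1) - ((m:ℝ)+1) * (b + δ) * b^m
          = (ε * b - ((m:ℝ)+1) * δ) * b^m := by
        rw [hεdef, pow_succ]; ring
      have h4 : ((m:ℝ)+1) * δ < ε * b := by
        rw [div_lt_iff₀ hε0] at hbig
        linarith
      have h5 : (0:ℝ) < b^m := by positivity
      nlinarith
    positivity
  -- IVT on [c,b]
  obtain ⟨r, hrmem, hGr⟩ := intermediate_value_Icc hcb.le hGcont.continuousOn
    (Set.mem_Icc.mpr ⟨hGc.le, hGb.le⟩)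
  have hrc : c < r := by
    rcases eq_or_lt_of_le hrmem.1 with h | h
    · exfalso; rw [← h] at hGr; linarith
    · exact h
  have hr0 : 0 < r := hc0.trans hrc
  have hGzero_iff : ∀ u : ℝ, 0 < u → (G u = 0 ↔ δ * u^(m+1) = c! * (u + δ) * S (m+1) u) := by
    intro u hu
    rw [hGdef]
    simp only
    constructor
    · intro h
      have he : Real.exp u ≠ 0 := (Real.exp_pos u).ne'
      have := mul_eq_zero.mp h
      rcases this with h' | h'
      · exact absurd h' he
      · linarith
    · intro h
      rw [show δ * u^(m+1) - c! * (u + δ) * S (m+1) u = 0 by linarith, mul_zero]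
  refine ⟨r, ⟨hr0, ?_⟩, ?_⟩
  · exact (key r hr0).mpr ((hGzero_iff r hr0).mp hGr)
  · rintro y ⟨hy0, hyeq⟩
    have hGy : G y = 0 := (hGzero_iff y hy0).mpr ((key y hy0).mp hyeq)
    have hyc : c < y := by
      by_contra hyc
      push_neg at hyc
      have := hanti (Set.mem_Icc.mpr ⟨le_rfl, hc0.le⟩) (Set.mem_Icc.mpr ⟨hy0.le, hyc⟩) hy0
      rw [hG0, hGy] at this
      exact lt_irrefl 0 this
    exact hmono.injOn (Set.mem_Ici.mpr hyc.le) (Set.mem_Ici.mpr hrc.le) (by rw [hGy, hGr])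
end

section
/- Let n ≥ 1 be an integer. The minimum of MG_{n,δ} := max_{u ≥ 0} G_{n,δ}(u) over δ ∈ (n, n+1) equals Ĝ_n = (-1)^{n+1}(e^{-1} - Σ_{k=0}^n (-1)^k/k!), attained at δ_{n,G} = ((-1)^{n+1} n!(e^{-1} - Σ_{k=0}^n (-1)^k/k!))^{-1} - 1, and there hold the bounds n+1 - 1/(n+2) < δ_{n,G} < n+1 and (n+1)/((n+2)(n+1)!) < Ĝ_n < (n+2)/((n+3)(n+1)!). -/
open Real Finset

/-- The function `G_{n,δ}`. -/
noncomputable def G (n : ℕ) (δ : ℝ) (u : ℝ) : ℝ :=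
  (-1 : ℝ) ^ (n + 1) *
    (Real.exp (-u) - ∑ k ∈ Finset.range (n + 1), (-1 : ℝ) ^ k * u ^ k / (Nat.factorial k)) /
      u ^ δ

/-- `MG_{n,δ}`: the maximum of `G_{n,δ}` over `u ≥ 0`. -/
noncomputable def MG (n : ℕ) (δ : ℝ) : ℝ := sSup (G n δ '' Set.Ici 0)

/-- The alternating Taylor remainder. -/
noncomputable def Rr (n : ℕ) (u : ℝ) : ℝ :=
  (-1 : ℝ) ^ (n + 1) *
    (Real.exp (-u) - ∑ k ∈ Finset.range (n + 1), (-1 : ℝ) ^ k * u ^ k / (Nat.factorial k))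

/-- Auxiliary integral. -/
noncomputable def II (m : ℕ) (u : ℝ) : ℝ :=
  ∫ s in (0:ℝ)..1, (1 - s) ^ m * Real.exp (-(u * s))

lemma G_eq (n : ℕ) (δ u : ℝ) : G n δ u = Rr n u / u ^ δ := by
  simp [G, Rr]

lemma Rr_zero (n : ℕ) : Rr n 0 = 0 := by
  have : ∑ k ∈ Finset.range (n + 1), (-1 : ℝ) ^ k * (0:ℝ) ^ k / (Nat.factorial k) = 1 := by
    rw [Finset.sum_eq_single 0]
    · simp
    · intro b _ hb
      simp [zero_pow hb]
    · simp
  simp [Rr, this]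

lemma Rr_zero' (u : ℝ) : Rr 0 u = 1 - Real.exp (-u) := by
  simp [Rr]

lemma Rr_succ (n : ℕ) (u : ℝ) :
    Rr (n + 1) u = u ^ (n + 1) / (Nat.factorial (n + 1)) - Rr n u := by
  have h : ∑ k ∈ Finset.range (n + 1 + 1), (-1 : ℝ) ^ k * u ^ k / (Nat.factorial k)
      = (∑ k ∈ Finset.range (n + 1), (-1 : ℝ) ^ k * u ^ k / (Nat.factorial k))
        + (-1 : ℝ) ^ (n+1) * u ^ (n+1) / (Nat.factorial (n+1)) := by
    rw [Finset.sum_range_succ]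
  rw [Rr, Rr, h]
  have : ((-1 : ℝ)) ^ (n + 1 + 1) = -(-1 : ℝ)^(n+1) := by ring
  rw [this]
  have h2 : ((-1:ℝ)^(n+1))^2 = 1 := by
    rw [← pow_mul, mul_comm, pow_mul]; norm_num
  linear_combination (u ^ (n+1) / (Nat.factorial (n+1) : ℝ)) * h2

lemma hasDerivAt_Rr_zero (u : ℝ) : HasDerivAt (Rr 0) (Real.exp (-u)) u := by
  have h : HasDerivAt (fun u : ℝ => 1 - Real.exp (-u)) (Real.exp (-u)) u := by
    have := ((hasDerivAt_id u).neg.exp).const_sub 1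
    simpa using this
  exact h.congr_of_eventuallyEq (Filter.Eventually.of_forall fun v => (Rr_zero' v))

lemma hasDerivAt_Rr_succ (n : ℕ) (u : ℝ) : HasDerivAt (Rr (n + 1)) (Rr n u) u := by
  have hsum : HasDerivAt
      (fun u : ℝ => ∑ k ∈ Finset.range (n + 2), (-1 : ℝ) ^ k * u ^ k / (Nat.factorial k))
      (∑ k ∈ Finset.range (n + 2), (-1 : ℝ) ^ k * ((k : ℝ) * u ^ (k - 1)) / (Nat.factorial k)) u := by
    apply HasDerivAt.fun_sum
    intro k _
    exact (((hasDerivAt_pow k u).const_mul ((-1 : ℝ) ^ k)).div_const (Nat.factorial k))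
  have hD : ∑ k ∈ Finset.range (n + 2), (-1 : ℝ) ^ k * ((k : ℝ) * u ^ (k - 1)) / (Nat.factorial k)
      = -∑ k ∈ Finset.range (n + 1), (-1 : ℝ) ^ k * u ^ k / (Nat.factorial k) := by
    rw [Finset.sum_range_succ']
    have h1 : ∀ i ∈ Finset.range (n + 1),
        (-1 : ℝ) ^ (i + 1) * (((i : ℝ) + 1) * u ^ (i + 1 - 1)) / (Nat.factorial (i + 1))
          = -((-1 : ℝ) ^ i * u ^ i / (Nat.factorial i)) := by
      intro i _
      have hf : ((Nat.factorial (i + 1) : ℝ)) = ((i : ℝ) + 1) * (Nat.factorial i) := by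
        push_cast [Nat.factorial_succ]; ring
      have hne : (Nat.factorial i : ℝ) ≠ 0 := by positivity
      rw [Nat.add_sub_cancel]
      rw [hf]
      field_simp
      ring
    rw [Finset.sum_congr rfl (by intro i hi; push_cast; exact h1 i hi)]
    simp
  have hexp : HasDerivAt (fun u : ℝ => Real.exp (-u)) (-Real.exp (-u)) u := by
    simpa using (hasDerivAt_id u).neg.exp
  have hcomb := (hexp.sub hsum).const_mul ((-1 : ℝ) ^ (n + 2))
  rw [hD] at hcomb
  have hval : (-1 : ℝ) ^ (n + 2) *
      (-Real.exp (-u) - -∑ k ∈ Finset.range (n + 1), (-1 : ℝ) ^ k * u ^ k / (Nat.factorial k))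
      = Rr n u := by
    rw [Rr, pow_succ, pow_succ]
    ring
  rw [hval] at hcomb
  exact hcomb

lemma Rr_pos (n : ℕ) {u : ℝ} (hu : 0 < u) : 0 < Rr n u := by
  induction n generalizing u with
  | zero =>
    rw [Rr_zero']
    have : Real.exp (-u) < 1 := Real.exp_lt_one_iff.mpr (by linarith)
    linarith
  | succ n ih =>
    have hmono : StrictMonoOn (Rr (n + 1)) (Set.Ici (0 : ℝ)) := by
      apply strictMonoOn_of_deriv_pos (convex_Ici 0)
      · exact fun x _ => (hasDerivAt_Rr_succ n x).continuousAt.continuousWithinAt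
      · intro x hx
        rw [interior_Ici] at hx
        rw [(hasDerivAt_Rr_succ n x).deriv]
        exact ih hx
    have := hmono (Set.self_mem_Ici) (Set.mem_Ici.mpr hu.le) hu
    rwa [Rr_zero] at this

/-- Uniform derivative formula for `Rr`. -/
lemma hasDerivAt_Rr (m : ℕ) (u : ℝ) :
    HasDerivAt (Rr m) (u ^ m / (Nat.factorial m) - Rr m u) u := by
  cases m with
  | zero =>
    have h := hasDerivAt_Rr_zero u
    have : Real.exp (-u) = u ^ 0 / (Nat.factorial 0) - Rr 0 u := by
      rw [Rr_zero']; simp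
    rwa [this] at h
  | succ k =>
    have h := hasDerivAt_Rr_succ k u
    have : Rr k u = u ^ (k + 1) / (Nat.factorial (k + 1)) - Rr (k + 1) u := by
      rw [Rr_succ]; ring
    rwa [this] at h

lemma cont_integrand (m : ℕ) (u : ℝ) :
    Continuous (fun s : ℝ => (1 - s) ^ m * Real.exp (-(u * s))) := by
  fun_prop

lemma II_rec (m : ℕ) (u : ℝ) :
    (m + 1 : ℝ) * II m u + u * II (m + 1) u = 1 := by
  have hderiv : ∀ s ∈ Set.uIcc (0 : ℝ) 1,
      HasDerivAt (fun s : ℝ => -((1 - s) ^ (m + 1) * Real.exp (-(u * s))))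
        ((m + 1 : ℝ) * ((1 - s) ^ m * Real.exp (-(u * s)))
          + u * ((1 - s) ^ (m + 1) * Real.exp (-(u * s)))) s := by
    intro s _
    have h1 : HasDerivAt (fun s : ℝ => (1 - s)) (-1) s := by
      simpa using (hasDerivAt_id s).const_sub 1
    have h2 : HasDerivAt (fun s : ℝ => (1 - s) ^ (m + 1))
        (((m + 1 : ℕ) : ℝ) * (1 - s) ^ m * (-1)) s := by
      simpa using h1.fun_pow (m + 1)
    have h3 : HasDerivAt (fun s : ℝ => Real.exp (-(u * s)))
        (Real.exp (-(u * s)) * (-u)) s := by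
      simpa using ((hasDerivAt_id s).const_mul u).neg.exp
    have h4 := (h2.fun_mul h3).fun_neg
    refine h4.congr_deriv ?_
    push_cast
    ring
  have hint : IntervalIntegrable
      (fun s : ℝ => (m + 1 : ℝ) * ((1 - s) ^ m * Real.exp (-(u * s)))
        + u * ((1 - s) ^ (m + 1) * Real.exp (-(u * s)))) MeasureTheory.volume 0 1 := by
    apply Continuous.intervalIntegrable
    fun_prop
  have hftc := intervalIntegral.integral_eq_sub_of_hasDerivAt hderiv hint
  have hsplit : (∫ s in (0:ℝ)..1, ((m + 1 : ℝ) * ((1 - s) ^ m * Real.exp (-(u * s)))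
        + u * ((1 - s) ^ (m + 1) * Real.exp (-(u * s)))))
      = (m + 1 : ℝ) * II m u + u * II (m + 1) u := by
    rw [intervalIntegral.integral_add
      ((continuous_const.fun_mul (cont_integrand m u)).intervalIntegrable 0 1)
      ((continuous_const.fun_mul (cont_integrand (m+1) u)).intervalIntegrable 0 1),
      intervalIntegral.integral_const_mul, intervalIntegral.integral_const_mul]
    rfl
  rw [hsplit] at hftc
  rw [hftc]
  simp [Real.exp_zero]

lemma II_base (u : ℝ) : u * II 0 u = 1 - Real.exp (-u) := by
  have hderiv : ∀ s ∈ Set.uIcc (0 : ℝ) 1,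
      HasDerivAt (fun s : ℝ => -Real.exp (-(u * s)))
        (u * ((1 - s) ^ 0 * Real.exp (-(u * s)))) s := by
    intro s _
    have h3 : HasDerivAt (fun s : ℝ => Real.exp (-(u * s)))
        (Real.exp (-(u * s)) * (-u)) s := by
      simpa using ((hasDerivAt_id s).const_mul u).neg.exp
    have h4 := h3.fun_neg
    refine h4.congr_deriv ?_
    simp
    ring
  have hint : IntervalIntegrable
      (fun s : ℝ => u * ((1 - s) ^ 0 * Real.exp (-(u * s)))) MeasureTheory.volume 0 1 := by
    apply Continuous.intervalIntegrable; fun_prop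
  have hftc := intervalIntegral.integral_eq_sub_of_hasDerivAt hderiv hint
  rw [intervalIntegral.integral_const_mul] at hftc
  rw [II]
  rw [hftc]
  simp [Real.exp_zero]
  ring

lemma Rr_eq_II (n : ℕ) (u : ℝ) :
    Rr n u = u ^ (n + 1) * II n u / (Nat.factorial n) := by
  induction n with
  | zero =>
    rw [Rr_zero', ← II_base u]
    simp
  | succ k ih =>
    have hrec := II_rec k u
    have hfac : ((Nat.factorial (k + 1)) : ℝ) = ((k : ℝ) + 1) * (Nat.factorial k) := by
      push_cast [Nat.factorial_succ]; ring
    have hne : (Nat.factorial k : ℝ) ≠ 0 := by positivity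
    have hk1 : ((k : ℝ) + 1) ≠ 0 := by positivity
    have hI : u * II (k + 1) u = 1 - ((k : ℝ) + 1) * II k u := by linarith
    have hpow : u ^ (k + 1 + 1) * II (k + 1) u = u ^ (k + 1) * (u * II (k + 1) u) := by ring
    rw [Rr_succ, ih, hfac, hpow, hI]
    field_simp

lemma II_pos (m : ℕ) {u : ℝ} (hu : 0 < u) : 0 < II m u := by
  have h := Rr_eq_II m u
  have hR := Rr_pos m hu
  have hfac : (0:ℝ) < (Nat.factorial m : ℝ) := by positivity
  have hpow : (0:ℝ) < u ^ (m+1) := by positivity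
  rcases lt_or_ge 0 (II m u) with h' | h'
  · exact h'
  · exfalso
    have h1 : u ^ (m+1) * II m u ≤ 0 := mul_nonpos_of_nonneg_of_nonpos hpow.le h'
    have h2 : Rr m u ≤ 0 := h ▸ div_nonpos_of_nonpos_of_nonneg h1 hfac.le
    linarith

lemma II_cs (m : ℕ) {u : ℝ} (hu : 0 < u) :
    II (m + 1) u ^ 2 ≤ II m u * II (m + 2) u := by
  have key : ∀ t : ℝ, 0 ≤ II m u - 2 * t * II (m + 1) u + t ^ 2 * II (m + 2) u := by
    intro t
    have hnonneg : 0 ≤ ∫ s in (0:ℝ)..1,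
        (1 - s) ^ m * Real.exp (-(u * s)) * (1 - t * (1 - s)) ^ 2 := by
      apply intervalIntegral.integral_nonneg (by norm_num)
      intro s hs
      have h1 : (0:ℝ) ≤ 1 - s := by simp at hs; linarith [hs.2]
      positivity
    have hexpand : (∫ s in (0:ℝ)..1, (1 - s) ^ m * Real.exp (-(u * s)) * (1 - t * (1 - s)) ^ 2)
        = II m u - 2 * t * II (m + 1) u + t ^ 2 * II (m + 2) u := by
      have hptw : ∀ s : ℝ, (1 - s) ^ m * Real.exp (-(u * s)) * (1 - t * (1 - s)) ^ 2
          = (1 - s) ^ m * Real.exp (-(u * s))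
            - (2 * t) * ((1 - s) ^ (m + 1) * Real.exp (-(u * s)))
            + (t ^ 2) * ((1 - s) ^ (m + 2) * Real.exp (-(u * s))) := by
        intro s; ring
      rw [intervalIntegral.integral_congr (fun s _ => hptw s)]
      rw [intervalIntegral.integral_add
        (((cont_integrand m u).fun_sub (continuous_const.fun_mul (cont_integrand (m+1) u))).intervalIntegrable 0 1)
        ((continuous_const.fun_mul (cont_integrand (m+2) u)).intervalIntegrable 0 1),
        intervalIntegral.integral_sub
        ((cont_integrand m u).intervalIntegrable 0 1)
        ((continuous_const.fun_mul (cont_integrand (m+1) u)).intervalIntegrable 0 1),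
        intervalIntegral.integral_const_mul, intervalIntegral.integral_const_mul]
      rfl
    rw [hexpand] at hnonneg
    exact hnonneg
  have h2 := II_pos (m + 2) hu
  have hthis := key (II (m + 1) u / II (m + 2) u)
  have h3 : II (m + 2) u ≠ 0 := ne_of_gt h2
  have h4 : II m u - 2 * (II (m + 1) u / II (m + 2) u) * II (m + 1) u
      + (II (m + 1) u / II (m + 2) u) ^ 2 * II (m + 2) u
      = II m u - II (m + 1) u ^ 2 / II (m + 2) u := by
    field_simp
    ring
  rw [h4] at hthis
  have h5 : II (m + 1) u ^ 2 / II (m + 2) u ≤ II m u := by linarith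
  calc II (m + 1) u ^ 2 = (II (m + 1) u ^ 2 / II (m + 2) u) * II (m + 2) u := by field_simp
    _ ≤ II m u * II (m + 2) u := mul_le_mul_of_nonneg_right h5 h2.le

/-- The key correlation inequality. -/
lemma key_ineq (m : ℕ) {u : ℝ} (hu : 0 < u) :
    II m u * II (m + 1) u + II (m + 1) u - II m u ≤ 0 := by
  have cs := II_cs m hu
  have r1 := II_rec m u
  have r2 := II_rec (m + 1) u
  push_cast at r2
  simp only [show m + 1 + 1 = m + 2 from rfl] at r2
  have h0 : 0 ≤ u * (II m u * II (m + 2) u - II (m + 1) u ^ 2) :=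
    mul_nonneg hu.le (by linarith)
  have heq : u * (II m u * II (m + 2) u - II (m + 1) u ^ 2)
      = II m u - II (m + 1) u - II m u * II (m + 1) u := by
    linear_combination (II m u) * r2 - (II (m + 1) u) * r1
  linarith [heq ▸ h0]

/-- `u ↦ u · Rr m u / Rr (m+1) u` is antitone on `(0,∞)`. -/
lemma ratio_anti (m : ℕ) :
    AntitoneOn (fun u => u * Rr m u / Rr (m + 1) u) (Set.Ioi (0:ℝ)) := by
  have hderiv : ∀ u : ℝ, 0 < u → HasDerivAt (fun u => u * Rr m u / Rr (m + 1) u)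
      (((1 * Rr m u + u * (u ^ m / (Nat.factorial m) - Rr m u)) * Rr (m + 1) u
        - (u * Rr m u) * (u ^ (m+1) / (Nat.factorial (m+1)) - Rr (m+1) u)) / (Rr (m + 1) u) ^ 2) u := by
    intro u hu
    exact ((hasDerivAt_id u).mul (hasDerivAt_Rr m u)).div (hasDerivAt_Rr (m+1) u)
      (ne_of_gt (Rr_pos (m+1) hu))
  have hnum : ∀ u : ℝ, 0 < u →
      ((1 * Rr m u + u * (u ^ m / (Nat.factorial m) - Rr m u)) * Rr (m + 1) u
        - (u * Rr m u) * (u ^ (m+1) / (Nat.factorial (m+1)) - Rr (m+1) u)) ≤ 0 := by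
    intro u hu
    have e1 := Rr_eq_II m u
    have e2 := Rr_eq_II (m+1) u
    have r1 := II_rec m u
    have hk := key_ineq m hu
    have hfac : ((Nat.factorial (m + 1)) : ℝ) = ((m : ℝ) + 1) * (Nat.factorial m) := by
      push_cast [Nat.factorial_succ]; ring
    have hne : (Nat.factorial m : ℝ) ≠ 0 := by positivity
    have hm1 : ((m : ℝ) + 1) ≠ 0 := by positivity
    have hEq : ((1 * Rr m u + u * (u ^ m / (Nat.factorial m) - Rr m u)) * Rr (m + 1) u
        - (u * Rr m u) * (u ^ (m+1) / (Nat.factorial (m+1)) - Rr (m+1) u))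
        = u ^ (2*m+3) / ((Nat.factorial m : ℝ) * (Nat.factorial (m+1)))
          * (II m u * II (m + 1) u + II (m + 1) u - II m u) := by
      rw [e1, e2, hfac]
      field_simp
      ring
    rw [hEq]
    apply mul_nonpos_of_nonneg_of_nonpos
    · positivity
    · exact hk
  apply antitoneOn_of_deriv_nonpos (convex_Ioi 0)
  · exact fun x hx => (hderiv x hx).continuousAt.continuousWithinAt
  · intro x hx
    rw [interior_Ioi] at hx
    exact (hderiv x hx).differentiableAt.differentiableWithinAt
  · intro x hx
    rw [interior_Ioi] at hx
    rw [(hderiv x hx).deriv]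
    apply div_nonpos_of_nonpos_of_nonneg (hnum x hx)
    positivity

lemma G_le (n : ℕ) {δ : ℝ} (hδl : (n : ℝ) ≤ δ) (hδu : δ ≤ (n : ℝ) + 1) {u : ℝ} (hu : 0 ≤ u) :
    G n δ u ≤ (n : ℝ) + 2 := by
  rcases eq_or_lt_of_le hu with h0 | h0
  · rw [G_eq, ← h0, Rr_zero, zero_div]
    positivity
  rcases le_total u 1 with h1 | h1
  · rw [G_eq]
    have hfacpos : (0:ℝ) < (Nat.factorial (n+1) : ℝ) := by positivity
    have hfac1 : (1:ℝ) ≤ (Nat.factorial (n+1) : ℝ) := by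
      exact_mod_cast Nat.one_le_iff_ne_zero.mpr (Nat.factorial_ne_zero (n+1))
    have hpos : (0:ℝ) < u ^ δ := Real.rpow_pos_of_pos h0 δ
    have hRle : Rr n u ≤ u ^ (n+1) / (Nat.factorial (n+1)) := by
      have hp := Rr_pos (n+1) h0
      have hs := Rr_succ n u
      linarith
    have hpowle : (u : ℝ) ^ (n+1) ≤ u ^ δ := by
      have he : (u : ℝ) ^ (n+1) = u ^ (((n+1 : ℕ)) : ℝ) := (Real.rpow_natCast u (n+1)).symm
      rw [he]
      apply Real.rpow_le_rpow_of_exponent_ge h0 h1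
      push_cast; linarith
    have h2 : Rr n u ≤ u ^ δ / (Nat.factorial (n+1)) := by
      refine le_trans hRle ?_
      gcongr
    have h3 : Rr n u / u ^ δ ≤ (u ^ δ / (Nat.factorial (n+1))) / u ^ δ := by gcongr
    have h4 : (u ^ δ / (Nat.factorial (n+1) : ℝ)) / u ^ δ = 1 / (Nat.factorial (n+1) : ℝ) := by
      field_simp
    rw [h4] at h3
    have h5 : (1:ℝ) / (Nat.factorial (n+1) : ℝ) ≤ 1 := by
      rw [div_le_one hfacpos]; exact hfac1
    have : (0:ℝ) ≤ (n:ℝ) + 1 := by positivity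
    linarith
  · rw [G_eq]
    have hpos : (0:ℝ) < u ^ δ := Real.rpow_pos_of_pos h0 δ
    have hun : (1:ℝ) ≤ u ^ n := one_le_pow₀ h1
    have hPabs : |∑ k ∈ Finset.range (n+1), (-1:ℝ)^k * u^k / (Nat.factorial k)|
        ≤ ((n:ℝ) + 1) * u ^ n := by
      calc |∑ k ∈ Finset.range (n+1), (-1:ℝ)^k * u^k / (Nat.factorial k)|
          ≤ ∑ k ∈ Finset.range (n+1), |(-1:ℝ)^k * u^k / (Nat.factorial k)| :=
            Finset.abs_sum_le_sum_abs _ _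
        _ ≤ ∑ _k ∈ Finset.range (n+1), u ^ n := by
            apply Finset.sum_le_sum
            intro k hk
            rw [Finset.mem_range] at hk
            have h1k : (1:ℝ) ≤ (Nat.factorial k : ℝ) := by
              exact_mod_cast Nat.one_le_iff_ne_zero.mpr (Nat.factorial_ne_zero k)
            have habs : |(-1:ℝ)^k * u^k / (Nat.factorial k)| = u^k / (Nat.factorial k) := by
              rw [abs_div, abs_mul, abs_pow, abs_pow, abs_neg, abs_one, one_pow, one_mul,
                abs_of_pos h0, abs_of_pos (show (0:ℝ) < (Nat.factorial k : ℝ) by positivity)]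
            rw [habs]
            have hk' : u ^ k ≤ u ^ n := pow_le_pow_right₀ h1 (by omega)
            have : u ^ k / (Nat.factorial k : ℝ) ≤ u ^ k / 1 := by
              apply div_le_div_of_nonneg_left (by positivity) one_pos h1k
            simp at this
            linarith
        _ = ((n:ℝ) + 1) * u ^ n := by
            rw [Finset.sum_const, Finset.card_range]
            push_cast; ring
    have hexp : Real.exp (-u) ≤ 1 := Real.exp_le_one_iff.mpr (by linarith)
    have hexp0 : 0 < Real.exp (-u) := Real.exp_pos _
    have hRabs : Rr n u ≤ 1 + ((n:ℝ) + 1) * u ^ n := by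
      have h' : Rr n u ≤ |Rr n u| := le_abs_self _
      have h'' : |Rr n u| ≤ |Real.exp (-u)| +
          |∑ k ∈ Finset.range (n+1), (-1:ℝ)^k * u^k / (Nat.factorial k)| := by
        rw [Rr, abs_mul, abs_pow, abs_neg, abs_one, one_pow, one_mul]
        exact abs_sub _ _
      have he : |Real.exp (-u)| ≤ 1 := by rw [abs_of_pos hexp0]; exact hexp
      linarith
    have hpow2 : u ^ n ≤ u ^ δ := by
      have he : (u : ℝ) ^ n = u ^ ((n : ℕ) : ℝ) := (Real.rpow_natCast u n).symm
      rw [he]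
      exact Real.rpow_le_rpow_of_exponent_le h1 hδl
    rw [div_le_iff₀ hpos]
    have : Rr n u ≤ ((n:ℝ) + 2) * u ^ n := by nlinarith
    nlinarith

set_option maxHeartbeats 1000000 in
theorem stmt19 (n : ℕ) (hn : 1 ≤ n) (δG Gn : ℝ)
    (hGn : Gn = (-1 : ℝ) ^ (n + 1) *
      (Real.exp (-1) - ∑ k ∈ Finset.range (n + 1), (-1 : ℝ) ^ k / (Nat.factorial k : ℝ)))
    (hδG : δG = ((-1 : ℝ) ^ (n + 1) * (Nat.factorial n : ℝ) *
      (Real.exp (-1) - ∑ k ∈ Finset.range (n + 1), (-1 : ℝ) ^ k / (Nat.factorial k : ℝ)))⁻¹ - 1) :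
    δG ∈ Set.Ioo (n : ℝ) ((n : ℝ) + 1) ∧
    (∀ δ ∈ Set.Ioo (n : ℝ) ((n : ℝ) + 1), Gn ≤ MG n δ) ∧
    MG n δG = Gn ∧
    (n : ℝ) + 1 - 1 / ((n : ℝ) + 2) < δG ∧ δG < (n : ℝ) + 1 ∧
    ((n : ℝ) + 1) / (((n : ℝ) + 2) * (Nat.factorial (n + 1))) < Gn ∧
    Gn < ((n : ℝ) + 2) / (((n : ℝ) + 3) * (Nat.factorial (n + 1))) := by
  obtain ⟨m, rfl⟩ : ∃ m, n = m + 1 := ⟨n - 1, by omega⟩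
  clear hn
  -- identify Gn with Rr (m+1) 1
  have hsum1 : ∑ k ∈ Finset.range (m + 1 + 1), (-1 : ℝ) ^ k * (1:ℝ) ^ k / (Nat.factorial k)
      = ∑ k ∈ Finset.range (m + 1 + 1), (-1 : ℝ) ^ k / (Nat.factorial k : ℝ) := by
    simp
  have hGa : Gn = Rr (m + 1) 1 := by
    rw [hGn, Rr, hsum1]
  have hδa : δG = ((Nat.factorial (m + 1) : ℝ) * Rr (m + 1) 1)⁻¹ - 1 := by
    rw [hδG, Rr, hsum1]
    congr 2
    ring
  -- basic positivity and recurrences at u = 1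
  have ha0 : 0 < Rr (m + 1) 1 := Rr_pos _ one_pos
  have hb0 : 0 < Rr (m + 2) 1 := Rr_pos _ one_pos
  have hc0 : 0 < Rr (m + 3) 1 := Rr_pos _ one_pos
  have hd0 : 0 < Rr (m + 4) 1 := Rr_pos _ one_pos
  have hs1 : Rr (m + 2) 1 = 1 / (Nat.factorial (m + 2) : ℝ) - Rr (m + 1) 1 := by
    simpa using Rr_succ (m + 1) 1
  have hs2 : Rr (m + 3) 1 = 1 / (Nat.factorial (m + 3) : ℝ) - Rr (m + 2) 1 := by
    simpa using Rr_succ (m + 2) 1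
  have hs3 : Rr (m + 4) 1 = 1 / (Nat.factorial (m + 4) : ℝ) - Rr (m + 3) 1 := by
    simpa using Rr_succ (m + 3) 1
  have f2 : ((Nat.factorial (m + 2)) : ℝ) = ((m : ℝ) + 2) * (Nat.factorial (m + 1)) := by
    push_cast [Nat.factorial_succ]; ring
  have f3 : ((Nat.factorial (m + 3)) : ℝ) = ((m : ℝ) + 3) * (Nat.factorial (m + 2)) := by
    push_cast [Nat.factorial_succ]; ring
  have f4 : ((Nat.factorial (m + 4)) : ℝ) = ((m : ℝ) + 4) * (Nat.factorial (m + 3)) := by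
    push_cast [Nat.factorial_succ]; ring
  have hf1pos : (0:ℝ) < (Nat.factorial (m + 1) : ℝ) := by positivity
  have hf2pos : (0:ℝ) < (Nat.factorial (m + 2) : ℝ) := by positivity
  have hf3pos : (0:ℝ) < (Nat.factorial (m + 3) : ℝ) := by positivity
  have hf4pos : (0:ℝ) < (Nat.factorial (m + 4) : ℝ) := by positivity
  -- bounds on a := Rr (m+1) 1
  have hlow : 1 / (Nat.factorial (m + 2) : ℝ) - 1 / (Nat.factorial (m + 3) : ℝ)
      < Rr (m + 1) 1 := by
    have e2 : Rr (m + 2) 1 < 1 / (Nat.factorial (m + 3) : ℝ) := by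
      rw [hs2] at hc0; linarith
    linarith [hs1]
  have hupp : Rr (m + 1) 1 < 1 / (Nat.factorial (m + 2) : ℝ) - 1 / (Nat.factorial (m + 3) : ℝ)
      + 1 / (Nat.factorial (m + 4) : ℝ) := by
    have e3 : Rr (m + 3) 1 < 1 / (Nat.factorial (m + 4) : ℝ) := by
      rw [hs3] at hd0; linarith
    linarith [hs1, hs2]
  -- translate bounds on Gn
  have hGlow_eq : ((m : ℝ) + 2) / (((m : ℝ) + 3) * (Nat.factorial (m + 2) : ℝ))
      = 1 / (Nat.factorial (m + 2) : ℝ) - 1 / (Nat.factorial (m + 3) : ℝ) := by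
    rw [f3]; field_simp; ring
  have hGupp_eq : ((m : ℝ) + 3) / (((m : ℝ) + 4) * (Nat.factorial (m + 2) : ℝ))
      = 1 / (Nat.factorial (m + 2) : ℝ) - 1 / (Nat.factorial (m + 3) : ℝ)
      + 1 / (Nat.factorial (m + 4) : ℝ) := by
    rw [f4, f3]; field_simp; ring
  have hGnlow : ((m : ℝ) + 2) / (((m : ℝ) + 3) * (Nat.factorial (m + 2) : ℝ)) < Gn := by
    rw [hGlow_eq, hGa]; exact hlow
  have hGnupp : Gn < ((m : ℝ) + 3) / (((m : ℝ) + 4) * (Nat.factorial (m + 2) : ℝ)) := by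
    rw [hGupp_eq, hGa]; exact hupp
  -- bounds on δG
  have hKa_pos : 0 < (Nat.factorial (m + 1) : ℝ) * Rr (m + 1) 1 := by positivity
  have hKa_low : 1 / ((m : ℝ) + 3) < (Nat.factorial (m + 1) : ℝ) * Rr (m + 1) 1 := by
    have heq : (Nat.factorial (m + 1) : ℝ) *
        (1 / (Nat.factorial (m + 2) : ℝ) - 1 / (Nat.factorial (m + 3) : ℝ))
        = 1 / ((m : ℝ) + 3) := by
      rw [f3, f2]; field_simp; ring
    have := mul_lt_mul_of_pos_left hlow hf1pos
    linarith
  have hKa_upp : (Nat.factorial (m + 1) : ℝ) * Rr (m + 1) 1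
      < ((m : ℝ) + 3) / (((m : ℝ) + 4) * ((m : ℝ) + 2)) := by
    have heq : (Nat.factorial (m + 1) : ℝ) *
        (1 / (Nat.factorial (m + 2) : ℝ) - 1 / (Nat.factorial (m + 3) : ℝ)
          + 1 / (Nat.factorial (m + 4) : ℝ))
        = ((m : ℝ) + 3) / (((m : ℝ) + 4) * ((m : ℝ) + 2)) := by
      rw [f4, f3, f2]; field_simp; ring
    have := mul_lt_mul_of_pos_left hupp hf1pos
    linarith
  have hδupp : δG < (m : ℝ) + 2 := by
    rw [hδa]
    have h1 : ((Nat.factorial (m + 1) : ℝ) * Rr (m + 1) 1)⁻¹ < (1 / ((m : ℝ) + 3))⁻¹ :=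
      inv_strictAnti₀ (by positivity) hKa_low
    rw [one_div, inv_inv] at h1
    linarith
  have hδlow : (m : ℝ) + 2 - 1 / ((m : ℝ) + 3) < δG := by
    rw [hδa]
    have h1 : (((m : ℝ) + 3) / (((m : ℝ) + 4) * ((m : ℝ) + 2)))⁻¹
        < ((Nat.factorial (m + 1) : ℝ) * Rr (m + 1) 1)⁻¹ :=
      inv_strictAnti₀ hKa_pos hKa_upp
    have h2 : (((m : ℝ) + 3) / (((m : ℝ) + 4) * ((m : ℝ) + 2)))⁻¹
        = (((m : ℝ) + 4) * ((m : ℝ) + 2)) / ((m : ℝ) + 3) := inv_div _ _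
    rw [h2] at h1
    have h3 : ((m : ℝ) + 2) - 1 / ((m : ℝ) + 3) + 1
        = (((m : ℝ) + 4) * ((m : ℝ) + 2)) / ((m : ℝ) + 3) := by
      field_simp; ring
    linarith
  have hδIoo : δG ∈ Set.Ioo ((m : ℝ) + 1) ((m : ℝ) + 2) := by
    constructor
    · have : (1:ℝ) / ((m : ℝ) + 3) ≤ 1 := by
        rw [div_le_one (by positivity)]; linarith
      linarith
    · exact hδupp
  -- g(1) = δG
  have hs0 : Rr m 1 = 1 / (Nat.factorial (m + 1) : ℝ) - Rr (m + 1) 1 := by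
    have h := Rr_succ m 1
    simp only [one_pow, inv_eq_one_div] at h
    rw [one_div] at h ⊢
    linarith
  have hg1 : δG = Rr m 1 / Rr (m + 1) 1 := by
    rw [hδa, hs0]
    field_simp
  -- sign of u * Rr m u - δG * Rr (m+1) u
  have h1mem : (1:ℝ) ∈ Set.Ioi (0:ℝ) := Set.mem_Ioi.mpr one_pos
  have hphi_le : ∀ u : ℝ, 0 < u → u ≤ 1 → δG * Rr (m + 1) u ≤ u * Rr m u := by
    intro u hu hu1
    have := ratio_anti m (Set.mem_Ioi.mpr hu) h1mem hu1
    simp only [one_mul] at this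
    rw [← hg1] at this
    have hp := Rr_pos (m + 1) hu
    rw [le_div_iff₀ hp] at this
    linarith
  have hphi_ge : ∀ u : ℝ, 1 ≤ u → u * Rr m u ≤ δG * Rr (m + 1) u := by
    intro u hu1
    have hu : (0:ℝ) < u := lt_of_lt_of_le one_pos hu1
    have := ratio_anti m h1mem (Set.mem_Ioi.mpr hu) hu1
    simp only [one_mul] at this
    rw [← hg1] at this
    have hp := Rr_pos (m + 1) hu
    rw [div_le_iff₀ hp] at this
    linarith
  -- derivative of F
  have hF : ∀ u : ℝ, 0 < u → HasDerivAt (fun u => Rr (m + 1) u / u ^ δG)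
      ((Rr m u * u ^ δG - Rr (m + 1) u * (δG * u ^ (δG - 1))) / (u ^ δG) ^ 2) u := by
    intro u hu
    have h1 : HasDerivAt (Rr (m + 1)) (Rr m u) u := by
      have h := hasDerivAt_Rr (m + 1) u
      have he : u ^ (m + 1) / (Nat.factorial (m + 1) : ℝ) - Rr (m + 1) u = Rr m u := by
        rw [Rr_succ]; ring
      rwa [he] at h
    have h2 : HasDerivAt (fun x : ℝ => x ^ δG) (δG * u ^ (δG - 1)) u :=
      Real.hasDerivAt_rpow_const (Or.inl (ne_of_gt hu))
    exact h1.div h2 (ne_of_gt (Real.rpow_pos_of_pos hu δG))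
  have hnumsplit : ∀ u : ℝ, 0 < u →
      Rr m u * u ^ δG - Rr (m + 1) u * (δG * u ^ (δG - 1))
        = u ^ (δG - 1) * (u * Rr m u - δG * Rr (m + 1) u) := by
    intro u hu
    have hsplit : u ^ δG = u ^ (δG - 1) * u := by
      rw [← Real.rpow_add_one (ne_of_gt hu) (δG - 1), sub_add_cancel]
    rw [hsplit]; ring
  -- monotone on (0,1]
  have hmono : MonotoneOn (fun u => Rr (m + 1) u / u ^ δG) (Set.Ioc (0:ℝ) 1) := by
    apply monotoneOn_of_deriv_nonneg (convex_Ioc (0:ℝ) 1)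
    · exact fun x hx => (hF x hx.1).continuousAt.continuousWithinAt
    · intro x hx
      rw [interior_Ioc] at hx
      exact (hF x hx.1).differentiableAt.differentiableWithinAt
    · intro x hx
      rw [interior_Ioc] at hx
      rw [(hF x hx.1).deriv, hnumsplit x hx.1]
      apply div_nonneg _ (by positivity)
      apply mul_nonneg (le_of_lt (Real.rpow_pos_of_pos hx.1 _))
      have := hphi_le x hx.1 hx.2.le
      linarith
  -- antitone on [1,∞)
  have hanti : AntitoneOn (fun u => Rr (m + 1) u / u ^ δG) (Set.Ici (1:ℝ)) := by
    apply antitoneOn_of_deriv_nonpos (convex_Ici (1:ℝ))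
    · exact fun x hx => (hF x (lt_of_lt_of_le one_pos hx)).continuousAt.continuousWithinAt
    · intro x hx
      rw [interior_Ici] at hx
      exact (hF x (lt_trans one_pos hx)).differentiableAt.differentiableWithinAt
    · intro x hx
      rw [interior_Ici] at hx
      have hx0 : (0:ℝ) < x := lt_trans one_pos hx
      rw [(hF x hx0).deriv, hnumsplit x hx0]
      apply div_nonpos_of_nonpos_of_nonneg _ (by positivity)
      apply mul_nonpos_of_nonneg_of_nonpos (le_of_lt (Real.rpow_pos_of_pos hx0 _))
      have := hphi_ge x hx.le
      linarith
  have hF1 : Rr (m + 1) 1 / (1:ℝ) ^ δG = Gn := by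
    rw [Real.one_rpow, div_one, hGa]
  -- the global max
  have hub : ∀ u ∈ Set.Ici (0:ℝ), G (m + 1) δG u ≤ Gn := by
    intro u hu
    rw [G_eq]
    rcases eq_or_lt_of_le (Set.mem_Ici.mp hu) with h0 | h0
    · rw [← h0, Rr_zero, zero_div]
      rw [hGa]; exact ha0.le
    rcases le_total u 1 with h1 | h1
    · have := hmono (Set.mem_Ioc.mpr ⟨h0, h1⟩) (Set.mem_Ioc.mpr ⟨one_pos, le_refl 1⟩) h1
      simp only at this
      rw [hF1] at this
      exact this
    · have := hanti (Set.mem_Ici.mpr (le_refl 1)) (Set.mem_Ici.mpr h1) h1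
      simp only at this
      rw [hF1] at this
      exact this
  have hmemG : ∀ δ : ℝ, Gn ∈ G (m + 1) δ '' Set.Ici 0 := by
    intro δ
    exact ⟨1, Set.mem_Ici.mpr zero_le_one, by rw [G_eq, Real.one_rpow, div_one, ← hGa]⟩
  refine ⟨?_, ?_, ?_, ?_, ?_, ?_, ?_⟩
  · simp only [Set.mem_Ioo]
    push_cast
    constructor
    · linarith [hδIoo.1]
    · linarith [hδIoo.2]
  · intro δ hδ
    have hbdd : BddAbove (G (m + 1) δ '' Set.Ici 0) := by
      refine ⟨((m:ℝ) + 1) + 2, ?_⟩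
      rintro x ⟨u, hu, rfl⟩
      have := G_le (m + 1) (le_of_lt (by exact_mod_cast hδ.1)) (le_of_le_of_eq hδ.2.le (by push_cast; ring)) hu
      push_cast at this ⊢
      linarith
    exact le_csSup hbdd (hmemG δ)
  · rw [MG]
    apply IsGreatest.csSup_eq
    exact ⟨hmemG δG, by rintro x ⟨u, hu, rfl⟩; exact hub u hu⟩
  · push_cast
    have h3 : ((m:ℝ) + 1 + 2) = (m:ℝ) + 3 := by ring
    rw [h3]
    linarith
  · push_cast
    linarith
  · simp only [show m + 1 + 1 = m + 2 from rfl]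
    push_cast
    have h3 : ((m:ℝ) + 1 + 2) = (m:ℝ) + 3 := by ring
    have h4 : ((m:ℝ) + 1 + 1) = (m:ℝ) + 2 := by ring
    rw [h3, h4]
    linarith
  · simp only [show m + 1 + 1 = m + 2 from rfl]
    push_cast
    have h3 : ((m:ℝ) + 1 + 3) = (m:ℝ) + 4 := by ring
    have h4 : ((m:ℝ) + 1 + 2) = (m:ℝ) + 3 := by ring
    rw [h3, h4]
    linarith
end
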